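/- arXiv:1807.04474 — 3 statements merged into one kernel-verified Lean document; each statement's English description precedes it below -/
import Mathlib

section
/- Consider a GNEP with continuously differentiable θ_ν and c^ν. Let (x^k) ⊂ ℝ^n be a sequence converging to x̄ and, for each player ν, let (λ^{ν,k}) ⊂ ℝ^{r_ν} be vectors such that ∇_{x^ν}θ_ν(x^k) + ∇_{x^ν}c^ν(x^k) λ^{ν,k} → 0 and min{−c^ν(x^k), λ^{ν,k}} → 0 as k → ∞. If GNEP-MFCQ holds at x̄, then each sequence (λ^{ν,k}) is bounded; moreover, if λ̄^ν is a limit point of (λ^{ν,k}) for every ν, then x̄ together with λ̄ = (λ̄^1,…,λ̄^N) is a KKT point of the GNEP. -/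
open Filter Topology Finset Function RealInnerProductSpace

/-- The strategy space of a GNEP: one Euclidean block per player. -/
abbrev Strat {N : ℕ} (n : Fin N → ℕ) := (ν : Fin N) → EuclideanSpace ℝ (Fin (n ν))

/-- Partial gradient of `f : Strat n → ℝ` with respect to player `ν`'s block at `x`. -/
noncomputable def pgrad {N : ℕ} {n : Fin N → ℕ} (ν : Fin N)
    (f : Strat n → ℝ) (x : Strat n) : EuclideanSpace ℝ (Fin (n ν)) :=
  gradient (fun z => f (Function.update x ν z)) (x ν)

/-- Positive linear dependence of a family on a finite index set. -/
def PosLinDep {ι E : Type*} [AddCommGroup E] [Module ℝ E]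
    (s : Finset ι) (v : ι → E) : Prop :=
  ∃ a : ι → ℝ, (∀ i, 0 ≤ a i) ∧ (∃ i ∈ s, a i ≠ 0) ∧ ∑ i ∈ s, a i • v i = 0

/-- Linear dependence of a family on a finite index set. -/
def LinDep {ι E : Type*} [AddCommGroup E] [Module ℝ E]
    (s : Finset ι) (v : ι → E) : Prop :=
  ∃ a : ι → ℝ, (∃ i ∈ s, a i ≠ 0) ∧ ∑ i ∈ s, a i • v i = 0

/-- CPLD with respect to player `ν`. -/
def CPLDnu {N : ℕ} {n : Fin N → ℕ} {ι : Type*} (ν : Fin N)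
    (c : ι → Strat n → ℝ) (x : Strat n) : Prop :=
  ∀ I : Finset ι, (∀ i ∈ I, c i x = 0) →
    PosLinDep I (fun i => pgrad ν (c i) x) →
    ∃ U ∈ 𝓝 x, ∀ y ∈ U, LinDep I (fun i => pgrad ν (c i) y)

/-- EMFCQ with respect to player `ν`. -/
def EMFCQnu {N : ℕ} {n : Fin N → ℕ} {ι : Type*} (ν : Fin N)
    (c : ι → Strat n → ℝ) (x : Strat n) : Prop :=
  ∃ d : EuclideanSpace ℝ (Fin (n ν)), ∀ i, 0 ≤ c i x → inner (𝕜 := ℝ) (pgrad ν (c i) x) d < 0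


/-- KKT point of the GNEP with objectives `θ` and constraints `c`. -/
def KKTPoint {N : ℕ} {n : Fin N → ℕ} {r : Fin N → ℕ}
    (θ : Fin N → Strat n → ℝ) (c : (ν : Fin N) → Fin (r ν) → Strat n → ℝ)
    (x : Strat n) (lam : (ν : Fin N) → Fin (r ν) → ℝ) : Prop :=
  ∀ ν, (pgrad ν (θ ν) x + ∑ i, lam ν i • pgrad ν (c ν i) x = 0) ∧
    (∀ i, min (-(c ν i x)) (lam ν i) = 0)


/-!
Pairing the approximate stationarity condition of player `ν` with an MFCQ direction `d` gives
scalar sums `∑ i, λᵢ ⟪∇cᵢ, d⟫` that are bounded below. Approximate complementarity makes the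
multipliers bounded below and drives the multipliers of inactive constraints to zero, while
`⟪∇cᵢ, d⟫` is eventually negative for active constraints. Hence every summand is bounded above,
so (the sum being bounded below) every summand is also bounded below, which bounds the active
multipliers from above. The KKT conditions at a cluster point then follow by continuity.
-/

section Bounds

variable {α ι : Type*} {l : Filter α}

lemma Filter.isBoundedUnder_ge_of_sum [Fintype ι] {u : ι → α → ℝ}
    (hle : ∀ i, IsBoundedUnder (· ≤ ·) l (u i))
    (hsum : IsBoundedUnder (· ≥ ·) l fun k => ∑ i, u i k) (j : ι) :
    IsBoundedUnder (· ≥ ·) l (u j) := by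
  classical
  choose b hb using hle
  obtain ⟨m, hm⟩ := hsum
  refine ⟨m - ∑ i ∈ univ.erase j, b i, eventually_map.2 ?_⟩
  filter_upwards [eventually_all.2 fun i => eventually_map.1 (hb i), eventually_map.1 hm]
    with k hk hmk
  have hrest : ∑ i ∈ univ.erase j, u i k ≤ ∑ i ∈ univ.erase j, b i :=
    sum_le_sum fun i _ => hk i
  rw [← add_sum_erase _ _ (mem_univ j)] at hmk
  linarith

lemma Filter.isBoundedUnder_abs_of_sum_mul [Fintype ι] {lam s : α → ι → ℝ} {sbar : ι → ℝ}
    (hs : ∀ i, Tendsto (fun k => s k i) l (𝓝 (sbar i)))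
    (hsum : IsBoundedUnder (· ≥ ·) l fun k => ∑ i, lam k i * s k i)
    (hlam : ∀ i, IsBoundedUnder (· ≥ ·) l fun k => lam k i)
    (hsbar : ∀ i, sbar i < 0 ∨ Tendsto (fun k => lam k i) l (𝓝 0)) (j : ι) :
    IsBoundedUnder (· ≤ ·) l fun k => |lam k j| := by
  have hs_neg : ∀ i, sbar i < 0 → ∀ᶠ k in l, s k i ≤ sbar i / 2 := fun i hi =>
    (hs i).eventually (eventually_le_nhds (by linarith))
  have hterm_le : ∀ i, IsBoundedUnder (· ≤ ·) l fun k => lam k i * s k i := by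
    intro i
    rcases hsbar i with hi | hi
    · obtain ⟨m, hm⟩ := hlam i
      refine (((hs i).const_mul m).isBoundedUnder_le).mono_le ?_
      filter_upwards [eventually_map.1 hm, hs_neg i hi] with k hmk hsk
      nlinarith
    · exact (hi.mul (hs i)).isBoundedUnder_le
  rw [isBoundedUnder_le_abs]
  refine ⟨?_, hlam j⟩
  rcases hsbar j with hj | hj
  · obtain ⟨K, hK⟩ := isBoundedUnder_ge_of_sum hterm_le hsum j
    refine ⟨max 0 (K / (sbar j / 2)), eventually_map.2 ?_⟩
    filter_upwards [eventually_map.1 hK, hs_neg j hj] with k hKk hsk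
    rcases le_or_gt (lam k j) 0 with hneg | hpos
    · exact hneg.trans (le_max_left _ _)
    · refine le_max_of_le_right ((le_div_iff_of_neg (by linarith)).2 ?_)
      nlinarith
  · exact hj.isBoundedUnder_le

lemma exists_forall_abs_le_of_isBoundedUnder [Finite ι] {u : ℕ → ι → ℝ}
    (h : ∀ i, IsBoundedUnder (· ≤ ·) atTop fun k => |u k i|) : ∃ M, ∀ k i, |u k i| ≤ M := by
  choose M hM using fun i => (h i).bddAbove_range
  obtain ⟨M', hM'⟩ := (Set.finite_range M).bddAbove
  exact ⟨M', fun k i => (hM i ⟨k, rfl⟩).trans (hM' ⟨i, rfl⟩)⟩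

end Bounds

section Complementarity

variable {α : Type*} {l : Filter α} {a b : α → ℝ} {abar : ℝ}

lemma nonneg_of_tendsto_min [l.NeBot] (ha : Tendsto a l (𝓝 abar))
    (h : Tendsto (fun k => min (a k) (b k)) l (𝓝 0)) : 0 ≤ abar :=
  le_of_tendsto_of_tendsto' h ha fun _ => min_le_left _ _

lemma tendsto_zero_of_tendsto_min_of_pos (ha : Tendsto a l (𝓝 abar)) (habar : 0 < abar)
    (h : Tendsto (fun k => min (a k) (b k)) l (𝓝 0)) : Tendsto b l (𝓝 0) := by
  refine h.congr' ?_
  filter_upwards [ha.eventually (lt_mem_nhds (half_lt_self habar)),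
    h.eventually (gt_mem_nhds (half_pos habar))] with k hak hmin
  exact min_eq_right ((min_lt_iff.1 (hmin.trans hak)).resolve_left (lt_irrefl _)).le

lemma isBoundedUnder_ge_of_tendsto_min (h : Tendsto (fun k => min (a k) (b k)) l (𝓝 0)) :
    IsBoundedUnder (· ≥ ·) l b :=
  h.isBoundedUnder_ge.mono_ge (Eventually.of_forall fun _ => min_le_right _ _)

end Complementarity

theorem isBoundedUnder_multipliers_of_mfcq {α ι E : Type*} [NormedAddCommGroup E]
    [InnerProductSpace ℝ E] [Fintype ι] {l : Filter α} [l.NeBot] {g : α → E} {gbar : E}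
    {a : α → ι → E} {abar : ι → E} {cv : α → ι → ℝ} {cbar : ι → ℝ} {lam : α → ι → ℝ}
    (hg : Tendsto g l (𝓝 gbar)) (ha : ∀ i, Tendsto (fun k => a k i) l (𝓝 (abar i)))
    (hc : ∀ i, Tendsto (fun k => cv k i) l (𝓝 (cbar i)))
    (hstat : Tendsto (fun k => g k + ∑ i, lam k i • a k i) l (𝓝 0))
    (hcompl : ∀ i, Tendsto (fun k => min (-cv k i) (lam k i)) l (𝓝 0))
    (hmfcq : ∃ d, ∀ i, cbar i = 0 → ⟪abar i, d⟫ < 0) (j : ι) :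
    IsBoundedUnder (· ≤ ·) l fun k => |lam k j| := by
  obtain ⟨d, hd⟩ := hmfcq
  have hsum : Tendsto (fun k => ∑ i, lam k i * ⟪a k i, d⟫) l (𝓝 (⟪0, d⟫ - ⟪gbar, d⟫)) := by
    refine ((hstat.inner tendsto_const_nhds).sub (hg.inner tendsto_const_nhds)).congr fun k => ?_
    simp [inner_add_left, sum_inner, real_inner_smul_left]
  refine isBoundedUnder_abs_of_sum_mul (fun i => (ha i).inner tendsto_const_nhds)
    hsum.isBoundedUnder_ge (fun i => isBoundedUnder_ge_of_tendsto_min (hcompl i)) (fun i => ?_) j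
  rcases (neg_nonneg.1 (nonneg_of_tendsto_min (hc i).neg (hcompl i))).lt_or_eq with hlt | heq
  · exact .inr (tendsto_zero_of_tendsto_min_of_pos (hc i).neg (neg_pos.2 hlt) (hcompl i))
  · exact .inl (hd i heq)

section ClusterPt

variable {α X Y Z : Type*} [TopologicalSpace X] [TopologicalSpace Y] [TopologicalSpace Z]
  {l : Filter α}

lemma Filter.Tendsto.mapClusterPt_prodMk {x : α → X} {y : α → Y} {a : X} {b : Y}
    (hx : Tendsto x l (𝓝 a)) (hy : MapClusterPt b l y) :
    MapClusterPt (a, b) l fun k => (x k, y k) := by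
  rw [((𝓝 a).basis_sets.prod_nhds (𝓝 b).basis_sets).mapClusterPt_iff_frequently]
  rintro ⟨s, t⟩ ⟨hs, ht⟩
  exact ((mapClusterPt_iff_frequently.1 hy t ht).and_eventually (hx hs)).mono
    fun _ h => ⟨h.2, h.1⟩

lemma MapClusterPt.eq_of_tendsto_comp [T2Space Z] {u : α → X} {p : X} {z : Z} {f : X → Z}
    (hu : MapClusterPt p l u) (hf : ContinuousAt f p) (h : Tendsto (fun k => f (u k)) l (𝓝 z)) :
    f p = z :=
  eq_of_nhds_neBot <| (hu.continuousAt_comp hf).clusterPt.mono h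

end ClusterPt

lemma continuous_pgrad {N : ℕ} {n : Fin N → ℕ} (ν : Fin N) {f : Strat n → ℝ}
    (hf : ContDiff ℝ 1 f) : Continuous (pgrad ν f) := by
  have hderiv : ∀ x : Strat n, HasFDerivAt (fun z => f (update x ν z))
      ((fderiv ℝ f x).comp (.pi (Pi.single ν (.id ℝ _)))) (x ν) := fun x => by
    have h := ((hf.differentiable one_ne_zero) _).hasFDerivAt.comp (x ν)
      (hasFDerivAt_update x (x ν))
    rwa [update_eq_self] at h
  have hpgrad : pgrad ν f = fun x => (InnerProductSpace.toDual ℝ _).symm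
      ((fderiv ℝ f x).comp (.pi (Pi.single ν (.id ℝ _)))) :=
    funext fun x => by rw [pgrad, gradient, (hderiv x).fderiv]
  rw [hpgrad]
  exact (LinearIsometryEquiv.continuous _).comp
    ((hf.continuous_fderiv one_ne_zero).clm_comp continuous_const)

/-- Under GNEP-MFCQ at the limit `xbar` of an approximate-KKT sequence,
the multiplier sequences are bounded, and any collection of their limit points yields a
KKT point of the GNEP. -/
theorem stmt5 {N : ℕ} {n r : Fin N → ℕ}
    (θ : Fin N → Strat n → ℝ)
    (c : (ν : Fin N) → Fin (r ν) → Strat n → ℝ)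
    (hθ : ∀ ν, ContDiff ℝ 1 (θ ν))
    (hc : ∀ ν i, ContDiff ℝ 1 (c ν i))
    (x : ℕ → Strat n) (xbar : Strat n)
    (hx : Tendsto x atTop (𝓝 xbar))
    (lam : ℕ → (ν : Fin N) → Fin (r ν) → ℝ)
    (h1 : ∀ ν, Tendsto (fun k => pgrad ν (θ ν) (x k) +
        ∑ i, lam k ν i • pgrad ν (c ν i) (x k)) atTop (𝓝 0))
    (h2 : ∀ ν i, Tendsto (fun k => min (-(c ν i (x k))) (lam k ν i)) atTop (𝓝 0))
    (hMFCQ : ∀ ν, ∃ d : EuclideanSpace ℝ (Fin (n ν)), ∀ i, c ν i xbar = 0 →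
      inner (𝕜 := ℝ) (pgrad ν (c ν i) xbar) d < 0) :
    (∀ ν, ∃ M : ℝ, ∀ k i, |lam k ν i| ≤ M) ∧
    (∀ lambar : (ν : Fin N) → Fin (r ν) → ℝ,
      (∀ ν, MapClusterPt (lambar ν) atTop (fun k => lam k ν)) →
      KKTPoint θ c xbar lambar) := by
  have hθ' : ∀ ν, Continuous (pgrad ν (θ ν)) := fun ν => continuous_pgrad ν (hθ ν)
  have hc' : ∀ ν i, Continuous (pgrad ν (c ν i)) := fun ν i => continuous_pgrad ν (hc ν i)
  refine ⟨fun ν => exists_forall_abs_le_of_isBoundedUnder fun i => ?_,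
    fun lambar hcl ν => ⟨?_, fun i => ?_⟩⟩
  · exact isBoundedUnder_multipliers_of_mfcq (((hθ' ν).tendsto xbar).comp hx)
      (fun i => ((hc' ν i).tendsto xbar).comp hx)
      (fun i => ((hc ν i).continuous.tendsto xbar).comp hx) (h1 ν) (h2 ν) (hMFCQ ν) i
  · have hF : Continuous fun p : Strat n × (Fin (r ν) → ℝ) =>
        pgrad ν (θ ν) p.1 + ∑ i, p.2 i • pgrad ν (c ν i) p.1 :=
      ((hθ' ν).comp continuous_fst).add <| continuous_finsetSum _ fun i _ =>
        ((continuous_apply i).comp continuous_snd).smul ((hc' ν i).comp continuous_fst)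
    exact (hx.mapClusterPt_prodMk (hcl ν)).eq_of_tendsto_comp hF.continuousAt (h1 ν)
  · have hF : Continuous fun p : Strat n × (Fin (r ν) → ℝ) => min (-(c ν i p.1)) (p.2 i) :=
      ((hc ν i).continuous.comp continuous_fst).neg.min ((continuous_apply i).comp continuous_snd)
    exact (hx.mapClusterPt_prodMk (hcl ν)).eq_of_tendsto_comp hF.continuousAt (h2 ν i)
end

section
/- Consider a GNEP with continuously differentiable constraint functions c^ν, let ν be a fixed player index, and let x ∈ ℝ^n be a point with c^ν(x) ≤ 0 at which c^ν satisfies MFCQ_ν. Then, for every ε > 0, there is a neighbourhood U of x such that for every y ∈ U there exists z^ν ∈ X_ν(y^{−ν}) with ‖z^ν − y^ν‖ ≤ ε. -/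
open Filter Topology Finset Function RealInnerProductSpace

/-!
Let `d` be an MFCQ direction for player `ν` at `x`. Moving player `ν` from `x ν` to `x ν + t • d`
makes every constraint strictly negative for small `t > 0`: inactive constraints stay negative by
continuity, active ones start at `0` with negative slope `⟪pgrad ν (c i) x, d⟫`. Fix such a `t`
with `‖t • d‖ ≤ ε`. Strict inequalities survive small perturbations, so for all `y` near `x` the
point `z = y ν + t • d` is feasible for `y^{-ν}`, and `‖z - y ν‖ = ‖t • d‖ ≤ ε`.
-/

theorem HasDerivAt.eventually_nhdsGT_neg {φ : ℝ → ℝ} {φ' t₀ : ℝ} (h : HasDerivAt φ φ' t₀)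
    (hle : φ t₀ ≤ 0) (hactive : φ t₀ = 0 → φ' < 0) : ∀ᶠ t in 𝓝[>] t₀, φ t < 0 := by
  rcases hle.lt_or_eq with hlt | hzero
  · exact (h.continuousAt.eventually_lt_const hlt).filter_mono nhdsWithin_le_nhds
  · have hslope : ∀ᶠ t in 𝓝[>] t₀, slope φ t₀ t < 0 :=
      (hasDerivAt_iff_tendsto_slope.mp h).eventually_lt_const (hactive hzero)
        |>.filter_mono (nhdsGT_le_nhdsNE t₀)
    filter_upwards [hslope, self_mem_nhdsWithin] with t hst (ht : t₀ < t)
    rw [slope_def_field, hzero, sub_zero, div_neg_iff] at hst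
    rcases hst with ⟨-, hbefore⟩ | ⟨hφ, -⟩
    · linarith
    · exact hφ

section PlayerBlock

variable {N : ℕ} {n : Fin N → ℕ} (ν : Fin N)

theorem hasLineDerivAt_update_pgrad {f : Strat n → ℝ} {x : Strat n} (hf : DifferentiableAt ℝ f x)
    (d : EuclideanSpace ℝ (Fin (n ν))) :
    HasLineDerivAt ℝ (fun z => f (update x ν z)) ⟪pgrad ν f x, d⟫ (x ν) d := by
  have hg : DifferentiableAt ℝ (fun z => f (update x ν z)) (x ν) :=
    ((update_eq_self ν x).symm ▸ hf).comp (x ν) (hasFDerivAt_update x (x ν)).differentiableAt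
  rw [pgrad, inner_gradient_left]
  exact hg.hasFDerivAt.hasLineDerivAt d

theorem eventually_forall_update_add_smul_neg {ι : Type*} [Finite ι] {c : ι → Strat n → ℝ}
    {x : Strat n} (hc : ∀ i, DifferentiableAt ℝ (c i) x) (hfeas : ∀ i, c i x ≤ 0)
    {d : EuclideanSpace ℝ (Fin (n ν))} (hd : ∀ i, c i x = 0 → ⟪pgrad ν (c i) x, d⟫ < 0) :
    ∀ᶠ t in 𝓝[>] (0 : ℝ), ∀ i, c i (update x ν (x ν + t • d)) < 0 :=
  eventually_all.2 fun i =>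
    (hasLineDerivAt_update_pgrad ν (hc i) d).eventually_nhdsGT_neg
      (by simpa using hfeas i) (by simpa using hd i)

end PlayerBlock

/-- Under MFCQ with respect to player `ν` at a point feasible for player `ν`,
for every `ε > 0` there is a neighbourhood `U` of `x` such that every `y ∈ U` admits a point
of `X_ν (y^{-ν})` within distance `ε` of `y^ν`. -/
theorem stmt7 {N : ℕ} {n : Fin N → ℕ} {r : ℕ}
    (ν : Fin N) (c : Fin r → Strat n → ℝ)
    (hc : ∀ i, ContDiff ℝ 1 (c i))
    (x : Strat n)
    (hfeas : ∀ i, c i x ≤ 0)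
    (hMFCQ : ∃ d : EuclideanSpace ℝ (Fin (n ν)), ∀ i, c i x = 0 →
      inner (𝕜 := ℝ) (pgrad ν (c i) x) d < 0) :
    ∀ ε > (0:ℝ), ∃ U ∈ 𝓝 x, ∀ y ∈ U, ∃ z : EuclideanSpace ℝ (Fin (n ν)),
      (∀ i, c i (Function.update y ν z) ≤ 0) ∧ ‖z - y ν‖ ≤ ε := by
  obtain ⟨d, hd⟩ := hMFCQ
  intro ε hε
  have hdiff i : Differentiable ℝ (c i) := (hc i).differentiable one_ne_zero
  have hshort : ∀ᶠ t in 𝓝 (0 : ℝ), ‖t • d‖ < ε :=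
    (by fun_prop : Continuous fun t : ℝ => ‖t • d‖).continuousAt.eventually_lt
      continuousAt_const (by simpa using hε)
  obtain ⟨t, hneg, hnorm⟩ :=
    ((eventually_forall_update_add_smul_neg ν (fun i => (hdiff i).differentiableAt) hfeas hd).and
      (hshort.filter_mono nhdsWithin_le_nhds)).exists
  have hstable : ∀ᶠ y in 𝓝 x, ∀ i, c i (update y ν (y ν + t • d)) < 0 :=
    eventually_all.2 fun i =>
      ((hdiff i).continuous.comp (by fun_prop : Continuous fun y : Strat n =>
        update y ν (y ν + t • d))).continuousAt.eventually_lt_const (hneg i)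
  refine ⟨_, hstable, fun y hy => ⟨y ν + t • d, fun i => (hy i).le, ?_⟩⟩
  rw [add_sub_cancel_left]
  exact hnorm.le
end

section
/- Consider a GNEP with continuously differentiable constraint functions, let ν be a fixed player index, and let x ∈ ℝ^n satisfy c^ν(x) ≤ 0. Assume that c^ν satisfies MFCQ_ν at x and that the partial Jacobian ∇_{x^ν}c^ν is Lipschitz continuous in a neighbourhood of x. Then there exist a constant C > 0 and a neighbourhood U of x such that for every y ∈ U the error bound dist(y^ν, X_ν(y^{−ν})) ≤ C ‖c_+^ν(y)‖ holds. -/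
open Filter Topology Finset Function RealInnerProductSpace

/-! MFCQ provides a direction `d` in player `ν`'s block along which every active constraint
strictly decreases. By continuity of the derivatives, near `x` the active constraints decrease
at a uniform rate `η` along `d`, while the inactive ones stay negative. Hence for `y` near `x`,
moving `y^ν` to `y^ν + (‖c₊(y)‖ / η) d` lowers each active constraint by at least
`‖c₊(y)‖ ≥ c_i(y)`, which gives a point of `X_ν(y^{-ν})` at distance `‖d‖ ‖c₊(y)‖ / η`. -/

section ConstraintViolation

variable {α ι : Type*} [Fintype ι]

noncomputable def constraintViolation (c : ι → α → ℝ) (y : α) : ℝ :=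
  √(∑ i, max (c i y) 0 ^ 2)

lemma constraintViolation_nonneg (c : ι → α → ℝ) (y : α) : 0 ≤ constraintViolation c y :=
  Real.sqrt_nonneg _

lemma le_constraintViolation (c : ι → α → ℝ) (y : α) (i : ι) :
    c i y ≤ constraintViolation c y := by
  refine (le_max_left _ 0).trans (Real.le_sqrt_of_sq_le ?_)
  exact Finset.single_le_sum (f := fun j => max (c j y) 0 ^ 2) (fun j _ => sq_nonneg _)
    (Finset.mem_univ i)

lemma constraintViolation_eq_zero {c : ι → α → ℝ} {y : α} (h : ∀ i, c i y ≤ 0) :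
    constraintViolation c y = 0 := by
  simp [constraintViolation, h]

lemma continuous_constraintViolation [TopologicalSpace α] {c : ι → α → ℝ}
    (hc : ∀ i, Continuous (c i)) :
    Continuous (constraintViolation c) := by
  unfold constraintViolation
  fun_prop

end ConstraintViolation

section Descent

variable {E : Type*} [NormedAddCommGroup E] [NormedSpace ℝ E]

lemma apply_add_smul_le_of_fderiv_le {f : E → ℝ} (hf : Differentiable ℝ f) {y e : E} {a t : ℝ}
    (ht : 0 ≤ t) (h : ∀ s ∈ Set.Icc 0 t, fderiv ℝ f (y + s • e) e ≤ a) :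
    f (y + t • e) ≤ f y + a * t := by
  set φ : ℝ → ℝ := fun s => f (y + s • e)
  have hφ : ∀ s, HasDerivAt φ (fderiv ℝ f (y + s • e) e) s := fun s =>
    (hf _).hasFDerivAt.comp_hasDerivAt s
      (((hasDerivAt_id s).smul_const e).const_add y |>.congr_deriv (one_smul ℝ e))
  have := (convex_Icc 0 t).image_sub_le_mul_sub_of_deriv_le
    (fun s _ => (hφ s).continuousAt.continuousWithinAt)
    (fun s _ => (hφ s).differentiableAt.differentiableWithinAt)
    (fun s hs => (hφ s).deriv ▸ h s (interior_subset hs)) 0 ⟨le_rfl, ht⟩ t ⟨ht, le_rfl⟩ ht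
  simp only [φ, zero_smul, add_zero, sub_zero] at this
  linarith

variable {ι : Type*} [Finite ι]

lemma exists_pos_eventually_fderiv_apply_le {c : ι → E → ℝ} (hc : ∀ i, ContDiff ℝ 1 (c i))
    {x e : E} (hdesc : ∀ i, c i x = 0 → fderiv ℝ (c i) x e < 0) :
    ∃ η > 0, ∀ᶠ p in 𝓝 x, ∀ i, c i x = 0 → fderiv ℝ (c i) p e ≤ -η := by
  have hrate : ∀ᶠ η in 𝓝[>] (0 : ℝ), ∀ i, c i x = 0 → fderiv ℝ (c i) x e < -η := by
    refine eventually_nhdsWithin_of_eventually_nhds (eventually_all.2 fun i => ?_)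
    by_cases hi : c i x = 0
    · exact ((continuous_neg.tendsto' (0 : ℝ) 0 neg_zero).eventually
        (lt_mem_nhds (hdesc i hi))).mono fun η hη _ => hη
    · exact Eventually.of_forall fun η h => absurd h hi
  obtain ⟨η, hη, hpos⟩ := (hrate.and self_mem_nhdsWithin).exists
  refine ⟨η, hpos, eventually_all.2 fun i => ?_⟩
  have hcont : Continuous fun p => fderiv ℝ (c i) p e :=
    ((hc i).continuous_fderiv one_ne_zero).clm_apply continuous_const
  by_cases hi : c i x = 0
  · exact (hcont.continuousAt.eventually_lt continuousAt_const (hη i hi)).mono fun p hp _ => hp.le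
  · exact Eventually.of_forall fun p h => absurd h hi

variable [Fintype ι]

lemma exists_pos_eventually_feasible_add_smul {c : ι → E → ℝ} (hc : ∀ i, ContDiff ℝ 1 (c i))
    {x e : E} (hfeas : ∀ i, c i x ≤ 0) (hdesc : ∀ i, c i x = 0 → fderiv ℝ (c i) x e < 0) :
    ∃ C > 0, ∀ᶠ y in 𝓝 x,
      ∃ t ∈ Set.Icc 0 (C * constraintViolation c y), ∀ i, c i (y + t • e) ≤ 0 := by
  obtain ⟨η, hη, hdescent⟩ := exists_pos_eventually_fderiv_apply_le hc hdesc
  have hinactive : ∀ᶠ p in 𝓝 x, ∀ i, c i x < 0 → c i p ≤ 0 := eventually_all.2 fun i => by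
    by_cases hi : c i x < 0
    · exact ((hc i).continuous.continuousAt.eventually_lt continuousAt_const hi).mono
        fun p hp _ => hp.le
    · exact Eventually.of_forall fun p h => absurd h hi
  obtain ⟨ρ, hρ, hball⟩ := Metric.eventually_nhds_iff_ball.1 (hdescent.and hinactive)
  set V := constraintViolation c
  have hV : Continuous V := continuous_constraintViolation fun i => (hc i).continuous
  have hstep : Tendsto (fun y => η⁻¹ * V y * ‖e‖) (𝓝 x) (𝓝 0) := by
    simpa [V, constraintViolation_eq_zero hfeas] using
      ((hV.tendsto x).const_mul η⁻¹).mul_const ‖e‖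
  refine ⟨η⁻¹, inv_pos.2 hη, ?_⟩
  filter_upwards [Metric.ball_mem_nhds x (half_pos hρ), hstep.eventually_lt_const (half_pos hρ)]
    with y hyx hVy
  have hseg : ∀ s ∈ Set.Icc 0 (η⁻¹ * V y), y + s • e ∈ Metric.ball x ρ := fun s hs => by
    have : ‖s • e‖ ≤ η⁻¹ * V y * ‖e‖ := by
      rw [norm_smul, Real.norm_of_nonneg hs.1]
      exact mul_le_mul_of_nonneg_right hs.2 (norm_nonneg e)
    rw [Metric.mem_ball] at hyx ⊢
    calc dist (y + s • e) x ≤ dist y x + ‖s • e‖ := by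
          rw [dist_eq_norm, dist_eq_norm, add_sub_right_comm]; exact norm_add_le _ _
      _ < ρ := by linarith
  have hVnonneg := constraintViolation_nonneg c y
  refine ⟨η⁻¹ * V y, ⟨by positivity, le_rfl⟩, fun i => ?_⟩
  rcases (hfeas i).lt_or_eq with hlt | heq
  · exact (hball _ (hseg _ ⟨by positivity, le_rfl⟩)).2 i hlt
  · calc c i (y + (η⁻¹ * V y) • e) ≤ c i y + -η * (η⁻¹ * V y) :=
          apply_add_smul_le_of_fderiv_le ((hc i).differentiable one_ne_zero) (by positivity)
            fun s hs => (hball _ (hseg s hs)).1 i heq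
      _ = c i y - V y := by field_simp; ring
      _ ≤ 0 := sub_nonpos.2 (le_constraintViolation c y i)

end Descent

section PartialGradient

variable {N : ℕ} {n : Fin N → ℕ}

lemma update_add_eq_add_single {ι : Type*} [DecidableEq ι] {β : ι → Type*}
    [∀ i, AddZeroClass (β i)] (y : ∀ i, β i) (i : ι) (v : β i) :
    Function.update y i (y i + v) = y + Pi.single i v := by
  ext j
  rcases eq_or_ne j i with rfl | h <;> simp [*]

lemma inner_pgrad_eq_fderiv {ν : Fin N} {f : Strat n → ℝ} {p : Strat n}
    (hf : DifferentiableAt ℝ f p) (v : EuclideanSpace ℝ (Fin (n ν))) :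
    ⟪pgrad ν f p, v⟫ = fderiv ℝ f p (Pi.single ν v) := by
  have h := ((update_eq_self ν p).symm ▸ hf).hasFDerivAt.comp (p ν) (hasFDerivAt_update p (p ν))
  rw [update_eq_self] at h
  rw [pgrad, inner_gradient_left, ← Function.comp_def, h.fderiv, ContinuousLinearMap.comp_apply]
  congr 1
  funext μ
  rcases eq_or_ne μ ν with rfl | h <;> simp [*]

end PartialGradient

theorem stmt8_general {N : ℕ} {n : Fin N → ℕ} {r : ℕ}
    (ν : Fin N) (c : Fin r → Strat n → ℝ)
    (hc : ∀ i, ContDiff ℝ 1 (c i))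
    (x : Strat n)
    (hfeas : ∀ i, c i x ≤ 0)
    (hMFCQ : ∃ d : EuclideanSpace ℝ (Fin (n ν)), ∀ i, c i x = 0 →
      inner (𝕜 := ℝ) (pgrad ν (c i) x) d < 0) :
    ∃ C > (0:ℝ), ∃ U ∈ 𝓝 x, ∀ y ∈ U,
      Metric.infDist (y ν) {w : EuclideanSpace ℝ (Fin (n ν)) |
          ∀ i, c i (Function.update y ν w) ≤ 0} ≤
        C * Real.sqrt (∑ i, max (c i y) 0 ^ 2) := by
  obtain ⟨d, hd⟩ := hMFCQ
  have hdesc : ∀ i, c i x = 0 → fderiv ℝ (c i) x (Pi.single ν d) < 0 := fun i hi =>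
    inner_pgrad_eq_fderiv ((hc i).differentiable one_ne_zero x) d ▸ hd i hi
  obtain ⟨C, hC, hstep⟩ := exists_pos_eventually_feasible_add_smul hc hfeas hdesc
  refine ⟨C * (‖d‖ + 1), by positivity, _, hstep, fun y ⟨t, ht, hfeas_t⟩ => ?_⟩
  have hmem : y ν + t • d ∈ {w | ∀ i, c i (update y ν w) ≤ 0} := fun i => by
    rw [update_add_eq_add_single, Pi.single_smul]
    exact hfeas_t i
  calc Metric.infDist (y ν) _ ≤ dist (y ν) (y ν + t • d) := Metric.infDist_le_dist_of_mem hmem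
    _ = t * ‖d‖ := by rw [dist_self_add_right, norm_smul, Real.norm_of_nonneg ht.1]
    _ ≤ C * constraintViolation c y * (‖d‖ + 1) :=
        mul_le_mul ht.2 (by linarith) (norm_nonneg d)
          (mul_nonneg hC.le (constraintViolation_nonneg c y))
    _ = C * (‖d‖ + 1) * √(∑ i, max (c i y) 0 ^ 2) := by rw [constraintViolation]; ring

/-- Under MFCQ with respect to player `ν` and local Lipschitz continuity of
the partial Jacobian, a local error bound on the distance to `X_ν (y^{-ν})` holds. -/
theorem stmt8 {N : ℕ} {n : Fin N → ℕ} {r : ℕ}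
    (ν : Fin N) (c : Fin r → Strat n → ℝ)
    (hc : ∀ i, ContDiff ℝ 1 (c i))
    (x : Strat n)
    (hfeas : ∀ i, c i x ≤ 0)
    (hMFCQ : ∃ d : EuclideanSpace ℝ (Fin (n ν)), ∀ i, c i x = 0 →
      inner (𝕜 := ℝ) (pgrad ν (c i) x) d < 0)
    (hLip : ∃ L : ℝ, ∃ V ∈ 𝓝 x, ∀ y ∈ V, ∀ z ∈ V, ∀ i,
      ‖pgrad ν (c i) y - pgrad ν (c i) z‖ ≤ L * dist y z) :
    ∃ C > (0:ℝ), ∃ U ∈ 𝓝 x, ∀ y ∈ U,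
      Metric.infDist (y ν) {w : EuclideanSpace ℝ (Fin (n ν)) |
          ∀ i, c i (Function.update y ν w) ≤ 0} ≤
        C * Real.sqrt (∑ i, max (c i y) 0 ^ 2) :=
  stmt8_general ν c hc x hfeas hMFCQ
end
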